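/- Fix p ∈ (0,∞), T > 0, A > 0, a real t with t ≥ 1, and real numbers a < b. Let (λ_n) ⊂ (0,1) and (π_n) ⊂ [1,∞) satisfy λ_n → 0 and n_{λ_n}/(a_{λ_n}·π_n) → p. Set 𝔳_n = max(T/p, 2A)·|n_{λ_n}/(a_{λ_n}·π_n) − p| and k_n = ⌊a_{λ_n}·π_n·(ε_{λ_n} + 𝔳_n)⌋. Then ℙ( X i ≤ t·a_{λ_n} for every integer i with ⌊a·k_n⌋ ≤ i ≤ ⌊b·k_n⌋ ) tends to 1 as n → ∞. -/

import Mathlib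

open MeasureTheory ProbabilityTheory Filter

/-- The rescaled time scale `a_λ = log(1/λ)`. -/
noncomputable def aLam (l : ℝ) : ℝ := Real.log (1 / l)

/-- The macroscopic space scale `n_λ = ⌊1/(λ·log(1/λ))⌋`. -/
noncomputable def nLam (l : ℝ) : ℤ := ⌊1 / (l * Real.log (1 / l))⌋

/-- `ε_λ = 1/(log(1/λ))³`. -/
noncomputable def epsLam (l : ℝ) : ℝ := 1 / (Real.log (1 / l)) ^ 3

/-- `𝔳_{λ,π} = max(T/p, 2A)·|n_λ/(a_λ·π) − p|`. -/
noncomputable def vFrak (p T A l π : ℝ) : ℝ :=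
  max (T / p) (2 * A) * |(nLam l : ℝ) / (aLam l * π) - p|

/-- The auxiliary scale `k_{λ,π} = ⌊a_λ·π·(ε_λ + 𝔳_{λ,π})⌋`. -/
noncomputable def kLam (p T A l π : ℝ) : ℤ :=
  ⌊aLam l * π * (epsLam l + vFrak p T A l π)⌋

/-! The event fails only if one of the `|b - a|·k + O(1)` clocks in the window rings after
time `t·a_λ`, which has probability `exp(-t·a_λ) ≤ λ`; a union bound reduces the claim to
`λ·k → 0`. Since `λ·n_λ ≤ 1/a_λ` and `n_λ ≈ p·a_λ·π`, already `λ·a_λ·π = O(1/a_λ) → 0`, while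
`ε_λ + 𝔳 → 0`, so `|λ·k| ≤ λ·a_λ·π·|ε_λ + 𝔳| + λ → 0`. -/

open Topology

theorem card_Icc_floor_le (x y : ℝ) :
    ((Finset.Icc ⌊x⌋ ⌊y⌋).card : ℝ) ≤ |y - x| + 2 := by
  have hcard : ((Finset.Icc ⌊x⌋ ⌊y⌋).card : ℝ) = max ((⌊y⌋ : ℝ) + 1 - ⌊x⌋) 0 := by
    rw [Int.card_Icc, ← Int.cast_natCast, Int.toNat_eq_max]
    push_cast
    rfl
  rw [hcard]
  have := Int.floor_le y
  have := Int.sub_one_lt_floor x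
  have := le_abs_self (y - x)
  exact max_le (by linarith) (by positivity)

theorem abs_floor_le (z : ℝ) : |(⌊z⌋ : ℝ)| ≤ |z| + 1 := by
  have := Int.floor_le z
  have := Int.sub_one_lt_floor z
  rw [abs_le]
  constructor <;> cases abs_cases z <;> linarith

theorem tendsto_measure_one_of_tendsto_measure_compl {Ω : Type*} [MeasurableSpace Ω]
    {μ : Measure Ω} [IsProbabilityMeasure μ] {ι : Type*} {l : Filter ι} {E : ι → Set Ω}
    (h : Tendsto (fun n => μ (E n)ᶜ) l (𝓝 0)) :
    Tendsto (fun n => μ (E n)) l (𝓝 1) := by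
  have hlow : Tendsto (fun n => 1 - μ (E n)ᶜ) l (𝓝 1) := by
    simpa using ENNReal.Tendsto.sub tendsto_const_nhds h (Or.inl ENNReal.one_ne_top)
  refine tendsto_of_tendsto_of_tendsto_of_le_of_le hlow tendsto_const_nhds (fun n => ?_)
    (fun n => prob_le_one)
  refine tsub_le_iff_right.mpr ?_
  calc 1 = μ (E n ∪ (E n)ᶜ) := by rw [Set.union_compl_self, measure_univ]
    _ ≤ μ (E n) + μ (E n)ᶜ := measure_union_le _ _

theorem measure_compl_forall_Icc_floor_le {Ω : Type*} [MeasurableSpace Ω] (μ : Measure Ω)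
    (X : ℤ → Ω → ℝ) (x y c q : ℝ) (hq : 0 ≤ q)
    (htail : ∀ i, μ {ω | c < X i ω} ≤ ENNReal.ofReal q) :
    μ {ω | ∀ i : ℤ, ⌊x⌋ ≤ i → i ≤ ⌊y⌋ → X i ω ≤ c}ᶜ ≤ ENNReal.ofReal ((|y - x| + 2) * q) := by
  have hsub : {ω | ∀ i : ℤ, ⌊x⌋ ≤ i → i ≤ ⌊y⌋ → X i ω ≤ c}ᶜ
      ⊆ ⋃ i ∈ Finset.Icc ⌊x⌋ ⌊y⌋, {ω | c < X i ω} := by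
    intro ω hω
    simp only [Set.mem_compl_iff, Set.mem_ofPred_eq, not_forall, not_le] at hω
    obtain ⟨i, hxi, hiy, hlt⟩ := hω
    exact Set.mem_biUnion (Finset.mem_Icc.mpr ⟨hxi, hiy⟩) hlt
  calc _ ≤ ∑ i ∈ Finset.Icc ⌊x⌋ ⌊y⌋, μ {ω | c < X i ω} :=
        (measure_mono hsub).trans (measure_biUnion_finset_le _ _)
    _ ≤ (Finset.Icc ⌊x⌋ ⌊y⌋).card • ENNReal.ofReal q :=
        Finset.sum_le_card_nsmul _ _ _ fun i _ => htail i
    _ = ENNReal.ofReal ((Finset.Icc ⌊x⌋ ⌊y⌋).card * q) := by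
        rw [nsmul_eq_mul, ENNReal.ofReal_mul (Nat.cast_nonneg _), ENNReal.ofReal_natCast]
    _ ≤ ENNReal.ofReal ((|y - x| + 2) * q) :=
        ENNReal.ofReal_le_ofReal (mul_le_mul_of_nonneg_right (card_Icc_floor_le x y) hq)

theorem aLam_pos {l : ℝ} (hl : l ∈ Set.Ioo (0 : ℝ) 1) : 0 < aLam l :=
  Real.log_pos ((one_lt_div hl.1).mpr hl.2)

theorem exp_neg_mul_aLam_le {l t : ℝ} (hl : l ∈ Set.Ioo (0 : ℝ) 1) (ht : 1 ≤ t) :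
    Real.exp (-(t * aLam l)) ≤ l := by
  calc Real.exp (-(t * aLam l)) ≤ Real.exp (-aLam l) := by
        gcongr
        nlinarith [aLam_pos hl]
    _ = l := by rw [aLam, one_div, Real.log_inv, neg_neg, Real.exp_log hl.1]

theorem tendsto_aLam_nhdsGT_zero : Tendsto aLam (𝓝[>] 0) atTop := by
  have : Tendsto (fun l => -Real.log l) (𝓝[>] 0) atTop :=
    tendsto_neg_atBot_atTop.comp Real.tendsto_log_nhdsGT_zero
  refine this.congr (fun l => ?_)
  rw [aLam, one_div, Real.log_inv]

theorem tendsto_epsLam_nhdsGT_zero : Tendsto epsLam (𝓝[>] 0) (𝓝 0) := by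
  have := ((tendsto_pow_atTop (by norm_num : (3 : ℕ) ≠ 0)).comp
    tendsto_aLam_nhdsGT_zero).inv_tendsto_atTop
  refine this.congr (fun l => ?_)
  simp [epsLam, aLam]

-- `n_λ ≤ 1/(λ·a_λ)` and `a_λ·π = n_λ / r` for `r = n_λ/(a_λ·π) ≥ q`.
theorem abs_mul_aLam_mul_le {l π q : ℝ} (hl : l ∈ Set.Ioo (0 : ℝ) 1) (hq : 0 < q)
    (hqr : q ≤ (nLam l : ℝ) / (aLam l * π)) :
    |l * (aLam l * π)| ≤ (q * aLam l)⁻¹ := by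
  have ha := aLam_pos hl
  set r := (nLam l : ℝ) / (aLam l * π) with hr
  have hr0 : 0 < r := hq.trans_le hqr
  have hn : (nLam l : ℝ) ≤ 1 / (l * aLam l) := Int.floor_le _
  have hn0 : (0 : ℝ) ≤ nLam l := by
    exact_mod_cast Int.floor_nonneg.mpr (one_div_pos.mpr (mul_pos hl.1 ha)).le
  have haπ : aLam l * π = nLam l / r := by
    have : aLam l * π ≠ 0 := fun h => hr0.ne' (by rw [hr, h, div_zero])
    have : (nLam l : ℝ) ≠ 0 := fun h => hr0.ne' (by rw [hr, h, zero_div])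
    rw [hr]; field_simp
  have hln : l * nLam l ≤ 1 / aLam l := by
    calc l * nLam l ≤ l * (1 / (l * aLam l)) := mul_le_mul_of_nonneg_left hn hl.1.le
      _ = 1 / aLam l := by field_simp [hl.1.ne']
  rw [haπ, abs_of_nonneg (mul_nonneg hl.1.le (div_nonneg hn0 hr0.le)), ← mul_div_assoc, ← one_div,
    div_le_div_iff₀ hr0 (by positivity)]
  calc l * nLam l * (q * aLam l) ≤ 1 / aLam l * (q * aLam l) := by gcongr
    _ = q := by field_simp
    _ ≤ 1 * r := by linarith

theorem tendsto_mul_kLam {p T A : ℝ} (hp : 0 < p) (lam π : ℕ → ℝ)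
    (hlam : ∀ n, lam n ∈ Set.Ioo (0 : ℝ) 1) (hlam0 : Tendsto lam atTop (𝓝 0))
    (hreg : Tendsto (fun n => (nLam (lam n) : ℝ) / (aLam (lam n) * π n)) atTop (𝓝 p)) :
    Tendsto (fun n => lam n * kLam p T A (lam n) (π n)) atTop (𝓝 0) := by
  have hlam0' : Tendsto lam atTop (𝓝[>] 0) :=
    tendsto_nhdsWithin_iff.mpr ⟨hlam0, .of_forall fun n => (hlam n).1⟩
  have haT := tendsto_aLam_nhdsGT_zero.comp hlam0'
  have hscale : Tendsto (fun n => lam n * (aLam (lam n) * π n)) atTop (𝓝 0) := by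
    refine squeeze_zero_norm' ?_ (haT.const_mul_atTop (half_pos hp)).inv_tendsto_atTop
    filter_upwards [hreg.eventually (eventually_ge_nhds (half_lt_self hp))] with n hn
    exact abs_mul_aLam_mul_le (hlam n) (half_pos hp) hn
  have hv : Tendsto (fun n => vFrak p T A (lam n) (π n)) atTop (𝓝 0) := by
    simpa [vFrak] using ((hreg.sub_const p).abs).const_mul (max (T / p) (2 * A))
  have hε := tendsto_epsLam_nhdsGT_zero.comp hlam0'
  have hmain : Tendsto (fun n => |lam n * (aLam (lam n) * π n) *
      (epsLam (lam n) + vFrak p T A (lam n) (π n))| + lam n) atTop (𝓝 0) := by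
    simpa using ((hscale.mul (hε.add hv)).abs).add hlam0
  refine squeeze_zero_norm' (.of_forall fun n => ?_) hmain
  have hl := (hlam n).1
  calc ‖lam n * kLam p T A (lam n) (π n)‖ = lam n * |(kLam p T A (lam n) (π n) : ℝ)| := by
        rw [Real.norm_eq_abs, abs_mul, abs_of_pos hl]
    _ ≤ lam n * (|aLam (lam n) * π n * (epsLam (lam n) + vFrak p T A (lam n) (π n))| + 1) :=
        mul_le_mul_of_nonneg_left (abs_floor_le _) hl.le
    _ = _ := by simp only [abs_mul, abs_of_pos hl]; ring

theorem statement9_general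
    {Ω : Type*} [MeasurableSpace Ω] (μ : Measure Ω) [IsProbabilityMeasure μ]
    (X : ℤ → Ω → ℝ)
    (hexp : ∀ (i : ℤ) (s : ℝ), 0 ≤ s → μ {ω | s < X i ω} = ENNReal.ofReal (Real.exp (-s)))
    (p T A t a b : ℝ) (hp : 0 < p)
    (ht : 1 ≤ t)
    (lam π : ℕ → ℝ)
    (hlam : ∀ n, lam n ∈ Set.Ioo (0 : ℝ) 1)
    (hlam0 : Tendsto lam atTop (nhds 0))
    (hreg : Tendsto (fun n => (nLam (lam n) : ℝ) / (aLam (lam n) * π n)) atTop (nhds p)) :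
    Tendsto
      (fun n : ℕ =>
        μ {ω | ∀ i : ℤ,
            ⌊a * (kLam p T A (lam n) (π n) : ℝ)⌋ ≤ i →
            i ≤ ⌊b * (kLam p T A (lam n) (π n) : ℝ)⌋ →
            X i ω ≤ t * aLam (lam n)})
      atTop (nhds 1) := by
  set k : ℕ → ℝ := fun n => kLam p T A (lam n) (π n)
  have hlim : Tendsto (fun n => |b - a| * |lam n * k n| + 2 * lam n) atTop (𝓝 0) := by
    simpa using ((tendsto_mul_kLam hp lam π hlam hlam0 hreg).abs.const_mul |b - a|).add
      (hlam0.const_mul 2)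
  refine tendsto_measure_one_of_tendsto_measure_compl
    (tendsto_of_tendsto_of_tendsto_of_le_of_le tendsto_const_nhds
      (by simpa using ENNReal.tendsto_ofReal hlim) (fun _ => zero_le) (fun n => ?_))
  have hl := (hlam n).1
  have htail (i : ℤ) : μ {ω | t * aLam (lam n) < X i ω} ≤ ENNReal.ofReal (lam n) := by
    rw [hexp i _ (mul_nonneg (by linarith) (aLam_pos (hlam n)).le)]
    exact ENNReal.ofReal_le_ofReal (exp_neg_mul_aLam_le (hlam n) ht)
  refine (measure_compl_forall_Icc_floor_le μ X (a * k n) (b * k n) _ _ hl.le htail).trans_eq ?_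
  congr 1
  rw [← sub_mul, abs_mul, abs_of_pos hl]
  ring

theorem statement9
    {Ω : Type*} [MeasurableSpace Ω] (μ : Measure Ω) [IsProbabilityMeasure μ]
    (X : ℤ → Ω → ℝ) (hmeas : ∀ i, Measurable (X i))
    (hindep : iIndepFun X μ)
    (hexp : ∀ (i : ℤ) (s : ℝ), 0 ≤ s → μ {ω | s < X i ω} = ENNReal.ofReal (Real.exp (-s)))
    (p T A t a b : ℝ) (hp : 0 < p) (hT : 0 < T) (hA : 0 < A)
    (ht : 1 ≤ t) (hab : a < b)
    (lam π : ℕ → ℝ)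
    (hlam : ∀ n, lam n ∈ Set.Ioo (0 : ℝ) 1) (hπ : ∀ n, 1 ≤ π n)
    (hlam0 : Tendsto lam atTop (nhds 0))
    (hreg : Tendsto (fun n => (nLam (lam n) : ℝ) / (aLam (lam n) * π n)) atTop (nhds p)) :
    Tendsto
      (fun n : ℕ =>
        μ {ω | ∀ i : ℤ,
            ⌊a * (kLam p T A (lam n) (π n) : ℝ)⌋ ≤ i →
            i ≤ ⌊b * (kLam p T A (lam n) (π n) : ℝ)⌋ →
            X i ω ≤ t * aLam (lam n)})
      atTop (nhds 1) :=
  statement9_general μ X hexp p T A t a b hp ht lam π hlam hlam0 hreg
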